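/- Let τ be a renewal process with inter-arrival law K, K(∞) = 1 − ∑_{n≥1} K(n), and correlation ρ with ρ_k = 0 for k > 1 (case q = 1). Then the annealed critical point equals h_c^ann(β) = −log(1−K(∞)) − β²/2 − log(1 + (K(1)/(1−K(∞)))·(e^{ρ_1 β²} − 1)). -/

import Mathlib

open scoped Classical
open MeasureTheory ProbabilityTheory Filter

/-- Renewal indicator for a possibly transient renewal process (inter-arrival
times with values in `ℕ∞`, `⊤` meaning an infinite jump). -/
noncomputable def renewalδ {Ω : Type*} (T : ℕ → Ω → ℕ∞) (n : ℕ) (x : Ω) : ℝ :=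
  if ∃ m : ℕ, ∑ k ∈ Finset.range m, T k x = (n : ℕ∞) then 1 else 0

/-- The constrained annealed partition function of the pinning model with
correlation function `ρ`. -/
noncomputable def Zfun {Ω : Type*} [MeasurableSpace Ω] (P : Measure Ω)
    (T : ℕ → Ω → ℕ∞) (ρ : ℕ → ℝ) (β h : ℝ) (N : ℕ) : ℝ :=
  ∫ x, Real.exp ((h + β ^ 2 / 2) * ∑ n ∈ Finset.Icc 1 N, renewalδ T n x
      + β ^ 2 * ∑ i ∈ Finset.Icc 1 N, ∑ j ∈ Finset.Icc (i + 1) N,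
          ρ (j - i) * renewalδ T i x * renewalδ T j x) * renewalδ T N x ∂P

/-!
Decomposing on the jumps `t` of the renewal up to `N`, the energy on the event "the first jumps
are `t`" is `(h + β²/2)·#jumps + ρ₁β²·#(unit jumps other than the first)`. Hence, up to a factor
in `[e^{-|ρ₁β²|}, e^{|ρ₁β²|}]` coming from the first jump, `Z_N` is the partition function of the
homogeneous pinning model with jump weights `w(k) = e^{h + β²/2} K_{(q=1)}(k)`. Its free energy
vanishes when `∑ w ≤ 1`, since then `Z_N ≤ 1`, and is at least `log θ` whenever finitely many
tilted weights `w(k) θ^{-k}` have mass `≥ 1`, since the renewal equation then propagates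
`Z_N ≥ c θ^N` from an initial window. This happens for every `θ < 1` when `∑ w = 1` and for some
`θ > 1` when `∑ w > 1`, so `h_c^ann` is the solution of `e^{h + β²/2} ∑ K_{(q=1)} = 1`.
-/

open Finset Topology

def compositions : ℕ → Finset (List ℕ)
  | 0 => {[]}
  | N + 1 => (Icc 1 (N + 1)).attach.biUnion fun k => (compositions (N + 1 - k)).image (k.1 :: ·)
  decreasing_by have := (mem_Icc.mp k.2).1; omega

lemma nil_mem_compositions {N : ℕ} : [] ∈ compositions N ↔ N = 0 := by
  cases N <;> simp [compositions]

lemma cons_mem_compositions {N k : ℕ} {t : List ℕ} :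
    k :: t ∈ compositions N ↔ 1 ≤ k ∧ k ≤ N ∧ t ∈ compositions (N - k) := by
  cases N with
  | zero => simp [compositions]; omega
  | succ N => simp [compositions]; tauto

lemma mem_compositions {N : ℕ} {t : List ℕ} :
    t ∈ compositions N ↔ t.sum = N ∧ ∀ k ∈ t, 0 < k := by
  induction t generalizing N with
  | nil => simp [nil_mem_compositions, eq_comm]
  | cons k t ih =>
    simp only [cons_mem_compositions, ih, List.sum_cons, List.mem_cons, forall_eq_or_imp]
    constructor
    · rintro ⟨hk, hkN, hsum, hpos⟩
      exact ⟨by omega, by omega, hpos⟩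
    · rintro ⟨hsum, hk, hpos⟩
      exact ⟨hk, by omega, by omega, hpos⟩

lemma sum_compositions {M : Type*} [AddCommMonoid M] {N : ℕ} (hN : 1 ≤ N) (g : List ℕ → M) :
    ∑ t ∈ compositions N, g t = ∑ k ∈ Icc 1 N, ∑ t ∈ compositions (N - k), g (k :: t) := by
  obtain ⟨N, rfl⟩ := Nat.exists_eq_add_of_le' hN
  rw [compositions, sum_biUnion, ← sum_attach (Icc 1 (N + 1))]
  · exact sum_congr rfl fun k _ => sum_image fun _ _ _ _ h => List.cons_injective h
  · intro k _ l _ hkl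
    simp only [Function.onFun, disjoint_left, mem_image]
    rintro _ ⟨t, -, rfl⟩ ⟨s, -, h⟩
    exact hkl (Subtype.ext (List.cons_eq_cons.mp h).1.symm)

noncomputable def homogeneousZ (w : ℕ → ℝ) (N : ℕ) : ℝ :=
  ∑ t ∈ compositions N, (t.map w).prod

lemma homogeneousZ_zero (w : ℕ → ℝ) : homogeneousZ w 0 = 1 := by
  simp [homogeneousZ, compositions]

lemma homogeneousZ_eq_sum (w : ℕ → ℝ) {N : ℕ} (hN : 1 ≤ N) :
    homogeneousZ w N = ∑ k ∈ Icc 1 N, w k * homogeneousZ w (N - k) := by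
  simp only [homogeneousZ, sum_compositions hN, List.map_cons, List.prod_cons, mul_sum]

lemma exists_pos_mul_pow_le {f : ℕ → ℝ} (hf : ∀ j, 0 < f j) (θ : ℝ) (L : ℕ) :
    ∃ c > 0, ∀ j < L, c * θ ^ j ≤ f j := by
  have hsmall : ∀ᶠ c in 𝓝[>] (0 : ℝ), ∀ j ∈ range L, c * θ ^ j ≤ f j := by
    refine (eventually_all_finset _).2 fun j _ => ?_
    have hlim : Tendsto (fun c : ℝ => c * θ ^ j) (𝓝[>] 0) (𝓝 0) := by
      simpa using ((tendsto_id (x := 𝓝 (0 : ℝ))).mul_const (θ ^ j)).mono_left nhdsWithin_le_nhds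
    exact hlim.eventually (eventually_le_nhds (hf j))
  obtain ⟨c, hcL, hc⟩ := (hsmall.and self_mem_nhdsWithin).exists
  exact ⟨c, hc, fun j hj => hcL j (mem_range.mpr hj)⟩

section Homogeneous

variable {w : ℕ → ℝ}

lemma homogeneousZ_nonneg (hw : ∀ k, 0 ≤ w k) (N : ℕ) : 0 ≤ homogeneousZ w N :=
  sum_nonneg fun t _ => List.prod_nonneg fun a ha => by
    obtain ⟨k, -, rfl⟩ := List.mem_map.mp ha
    exact hw k

lemma homogeneousZ_pos (hw : ∀ k, 0 ≤ w k) (hw1 : 0 < w 1) (N : ℕ) : 0 < homogeneousZ w N := by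
  induction N using Nat.strong_induction_on with
  | _ N ih =>
    rcases Nat.eq_zero_or_pos N with rfl | hN
    · simp [homogeneousZ_zero]
    rw [homogeneousZ_eq_sum w hN]
    exact sum_pos' (fun k _ => mul_nonneg (hw k) (homogeneousZ_nonneg hw _))
      ⟨1, mem_Icc.mpr ⟨le_rfl, hN⟩, mul_pos hw1 (ih _ (by omega))⟩

lemma homogeneousZ_le_one (hw : ∀ k, 0 ≤ w k) (hsum : ∀ M, ∑ k ∈ Icc 1 M, w k ≤ 1) (N : ℕ) :
    homogeneousZ w N ≤ 1 := by
  induction N using Nat.strong_induction_on with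
  | _ N ih =>
    rcases Nat.eq_zero_or_pos N with rfl | hN
    · simp [homogeneousZ_zero]
    calc homogeneousZ w N = ∑ k ∈ Icc 1 N, w k * homogeneousZ w (N - k) :=
          homogeneousZ_eq_sum w hN
      _ ≤ ∑ k ∈ Icc 1 N, w k := sum_le_sum fun k hk =>
          mul_le_of_le_one_right (hw k) (ih _ (by have := (mem_Icc.mp hk).1; omega))
      _ ≤ 1 := hsum N

lemma exists_mul_pow_le_homogeneousZ (hw : ∀ k, 0 ≤ w k) (hw1 : 0 < w 1) {θ : ℝ}
    (hθ : 0 < θ) {L : ℕ} (hL : 1 ≤ ∑ k ∈ Icc 1 L, w k / θ ^ k) :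
    ∃ c > 0, ∀ N, c * θ ^ N ≤ homogeneousZ w N := by
  obtain ⟨c, hc, hcL⟩ := exists_pos_mul_pow_le (homogeneousZ_pos hw hw1) θ L
  have hL1 : 1 ≤ L := by
    by_contra! h
    rw [Nat.lt_one_iff.mp h, Icc_eq_empty_of_lt zero_lt_one, sum_empty] at hL
    exact absurd hL (by norm_num)
  refine ⟨c, hc, fun N => ?_⟩
  induction N using Nat.strong_induction_on with
  | _ N ih =>
    rcases lt_or_ge N L with hNL | hLN
    · exact hcL N hNL
    calc c * θ ^ N ≤ c * θ ^ N * ∑ k ∈ Icc 1 L, w k / θ ^ k :=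
          le_mul_of_one_le_right (by positivity) hL
      _ = ∑ k ∈ Icc 1 L, w k * (c * θ ^ (N - k)) := by
          rw [mul_sum]
          refine sum_congr rfl fun k hk => ?_
          rw [pow_sub₀ _ hθ.ne' (by have := (mem_Icc.mp hk).2; omega)]
          ring
      _ ≤ ∑ k ∈ Icc 1 L, w k * homogeneousZ w (N - k) := sum_le_sum fun k hk =>
          mul_le_mul_of_nonneg_left (ih _ (by have := (mem_Icc.mp hk).1; omega)) (hw k)
      _ ≤ ∑ k ∈ Icc 1 N, w k * homogeneousZ w (N - k) :=
          sum_le_sum_of_subset_of_nonneg (Icc_subset_Icc_right hLN) fun k _ _ =>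
            mul_nonneg (hw k) (homogeneousZ_nonneg hw _)
      _ = homogeneousZ w N := (homogeneousZ_eq_sum w (hL1.trans hLN)).symm

end Homogeneous

section FreeEnergy

variable {w Z : ℕ → ℝ} {c C F s θ : ℝ}

lemma tendsto_log_mul_pow_div (hc : 0 < c) (hθ : 0 < θ) :
    Tendsto (fun N : ℕ => Real.log (c * θ ^ N) / N) atTop (𝓝 (Real.log θ)) := by
  have hlim := (tendsto_const_div_atTop_nhds_zero_nat (Real.log c)).add_const (Real.log θ)
  rw [zero_add] at hlim
  refine hlim.congr' ((eventually_ne_atTop 0).mono fun N hN => ?_)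
  dsimp only
  rw [Real.log_mul hc.ne' (pow_pos hθ N).ne', Real.log_pow, add_div,
    mul_div_cancel_left₀ _ (Nat.cast_ne_zero.mpr hN)]

lemma log_le_of_mul_pow_le (hc : 0 < c) (hθ : 0 < θ) (hZ : ∀ N, c * θ ^ N ≤ Z N)
    (hF : Tendsto (fun N : ℕ => Real.log (Z N) / N) atTop (𝓝 F)) : Real.log θ ≤ F :=
  le_of_tendsto_of_tendsto' (tendsto_log_mul_pow_div hc hθ) hF fun N =>
    div_le_div_of_nonneg_right (Real.log_le_log (by positivity) (hZ N)) N.cast_nonneg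

lemma le_log_of_le_mul_pow (hc : 0 < c) (hθ : 0 < θ) (hZ : ∀ N, 0 < Z N ∧ Z N ≤ c * θ ^ N)
    (hF : Tendsto (fun N : ℕ => Real.log (Z N) / N) atTop (𝓝 F)) : F ≤ Real.log θ :=
  le_of_tendsto_of_tendsto' hF (tendsto_log_mul_pow_div hc hθ) fun N =>
    div_le_div_of_nonneg_right (Real.log_le_log (hZ N).1 (hZ N).2) N.cast_nonneg

lemma sum_Icc_le_of_tendsto (hw : ∀ k, 0 ≤ w k)
    (hs : Tendsto (fun L => ∑ k ∈ Icc 1 L, w k) atTop (𝓝 s)) (M : ℕ) :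
    ∑ k ∈ Icc 1 M, w k ≤ s :=
  Monotone.ge_of_tendsto (fun _ _ hLM => sum_le_sum_of_subset_of_nonneg
    (Icc_subset_Icc_right hLM) fun k _ _ => hw k) hs M

lemma freeEnergy_nonpos (hw : ∀ k, 0 ≤ w k) (hw1 : 0 < w 1)
    (hs : Tendsto (fun L => ∑ k ∈ Icc 1 L, w k) atTop (𝓝 s)) (hs1 : s ≤ 1) (hc : 0 < c)
    (hC : 0 < C) (hZ : ∀ N, c * homogeneousZ w N ≤ Z N ∧ Z N ≤ C * homogeneousZ w N)
    (hF : Tendsto (fun N : ℕ => Real.log (Z N) / N) atTop (𝓝 F)) : F ≤ 0 := by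
  have hle : ∀ N, 0 < Z N ∧ Z N ≤ C * 1 ^ N := fun N => by
    refine ⟨(mul_pos hc (homogeneousZ_pos hw hw1 N)).trans_le (hZ N).1, ?_⟩
    rw [one_pow, mul_one]
    exact (hZ N).2.trans (mul_le_of_le_one_right hC.le
      (homogeneousZ_le_one hw (fun M => (sum_Icc_le_of_tendsto hw hs M).trans hs1) N))
  simpa using le_log_of_le_mul_pow hC one_pos hle hF

lemma log_le_freeEnergy (hw : ∀ k, 0 ≤ w k) (hw1 : 0 < w 1) (hc : 0 < c)
    (hZ : ∀ N, c * homogeneousZ w N ≤ Z N)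
    (hF : Tendsto (fun N : ℕ => Real.log (Z N) / N) atTop (𝓝 F)) (hθ : 0 < θ) {L : ℕ}
    (hL : 1 ≤ ∑ k ∈ Icc 1 L, w k / θ ^ k) : Real.log θ ≤ F := by
  obtain ⟨c', hc', hlow⟩ := exists_mul_pow_le_homogeneousZ hw hw1 hθ hL
  refine log_le_of_mul_pow_le (mul_pos hc hc') hθ (fun N => ?_) hF
  rw [mul_assoc]
  exact (mul_le_mul_of_nonneg_left (hlow N) hc.le).trans (hZ N)

lemma freeEnergy_nonneg (hw : ∀ k, 0 ≤ w k) (hw1 : 0 < w 1)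
    (hs : Tendsto (fun L => ∑ k ∈ Icc 1 L, w k) atTop (𝓝 s)) (hs1 : 1 ≤ s) (hc : 0 < c)
    (hZ : ∀ N, c * homogeneousZ w N ≤ Z N)
    (hF : Tendsto (fun N : ℕ => Real.log (Z N) / N) atTop (𝓝 F)) : 0 ≤ F := by
  by_contra! hneg
  set θ := Real.exp (F / 2)
  have hθ : 0 < θ := Real.exp_pos _
  have hθ1 : θ < 1 := Real.exp_lt_one_iff.mpr (by linarith)
  obtain ⟨L, hL⟩ := (hs.eventually (lt_mem_nhds (hθ1.trans_le hs1))).exists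
  have htilt : 1 ≤ ∑ k ∈ Icc 1 L, w k / θ ^ k := by
    calc 1 ≤ (∑ k ∈ Icc 1 L, w k) / θ := (one_le_div hθ).mpr hL.le
      _ = ∑ k ∈ Icc 1 L, w k / θ ^ 1 := by rw [sum_div, pow_one]
      _ ≤ ∑ k ∈ Icc 1 L, w k / θ ^ k := sum_le_sum fun k hk =>
          div_le_div_of_nonneg_left (hw k) (pow_pos hθ k)
            (pow_le_pow_of_le_one hθ.le hθ1.le (mem_Icc.mp hk).1)
  have := log_le_freeEnergy hw hw1 hc hZ hF hθ htilt
  rw [Real.log_exp] at this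
  linarith

lemma freeEnergy_pos (hw : ∀ k, 0 ≤ w k) (hw1 : 0 < w 1)
    (hs : Tendsto (fun L => ∑ k ∈ Icc 1 L, w k) atTop (𝓝 s)) (hs1 : 1 < s) (hc : 0 < c)
    (hZ : ∀ N, c * homogeneousZ w N ≤ Z N)
    (hF : Tendsto (fun N : ℕ => Real.log (Z N) / N) atTop (𝓝 F)) : 0 < F := by
  obtain ⟨L, hL⟩ := (hs.eventually (lt_mem_nhds hs1)).exists
  have hcont : ContinuousAt (fun θ : ℝ => ∑ k ∈ Icc 1 L, w k / θ ^ k) 1 := by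
    fun_prop (disch := norm_num)
  have hnear : ∀ᶠ θ in 𝓝[>] 1, 1 < ∑ k ∈ Icc 1 L, w k / θ ^ k :=
    nhdsWithin_le_nhds (hcont.eventually (lt_mem_nhds (by simpa using hL)))
  obtain ⟨θ, hθL, hθ1⟩ := (hnear.and self_mem_nhdsWithin).exists
  exact (Real.log_pos hθ1).trans_le
    (log_le_freeEnergy hw hw1 hc hZ hF (zero_lt_one.trans hθ1) hθL.le)

end FreeEnergy

/-- The renewal epochs `0, t₀, t₀ + t₁, …, t.sum` of the jump sequence `t`. -/
def epochs : List ℕ → Finset ℕ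
  | [] => {0}
  | k :: t => insert 0 ((epochs t).image (· + k))

lemma mem_epochs_cons {k n : ℕ} {t : List ℕ} :
    n ∈ epochs (k :: t) ↔ n = 0 ∨ k ≤ n ∧ n - k ∈ epochs t := by
  simp only [epochs, mem_insert, mem_image]
  constructor
  · rintro (rfl | ⟨m, hm, rfl⟩)
    · exact Or.inl rfl
    · exact Or.inr ⟨by omega, by simpa using hm⟩
  · rintro (rfl | ⟨hkn, hm⟩)
    · exact Or.inl rfl
    · exact Or.inr ⟨n - k, hm, by omega⟩

lemma zero_mem_epochs (t : List ℕ) : 0 ∈ epochs t := by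
  cases t <;> simp [epochs]

lemma sum_mem_epochs (t : List ℕ) : t.sum ∈ epochs t := by
  induction t with
  | nil => simp [epochs]
  | cons k t ih => exact mem_epochs_cons.mpr (Or.inr ⟨by simp, by simpa using ih⟩)

lemma le_sum_of_mem_epochs {t : List ℕ} {n : ℕ} (hn : n ∈ epochs t) : n ≤ t.sum := by
  induction t generalizing n with
  | nil => simp_all [epochs]
  | cons k t ih =>
    rcases mem_epochs_cons.mp hn with rfl | ⟨hkn, hm⟩
    · exact Nat.zero_le _
    · have := ih hm
      simp only [List.sum_cons]
      omega

section PositiveJumps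

variable {k : ℕ} {t : List ℕ}

lemma card_epochs (ht : ∀ k ∈ t, 0 < k) : #(epochs t) = t.length + 1 := by
  induction t with
  | nil => simp [epochs]
  | cons k t ih =>
    have hk : 0 < k := ht k (by simp)
    rw [epochs, card_insert_of_notMem (by simp; omega),
      card_image_of_injective _ (add_left_injective k), ih fun j hj => ht j (by simp [hj]),
      List.length_cons]

lemma one_mem_epochs_cons_iff (hk : 0 < k) : 1 ∈ epochs (k :: t) ↔ k = 1 := by
  rw [mem_epochs_cons]
  constructor
  · rintro (h | ⟨hk1, -⟩) <;> omega
  · rintro rfl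
    exact Or.inr ⟨le_rfl, zero_mem_epochs t⟩

lemma filter_adjacent_epochs_cons (hk : 0 < k) :
    {n ∈ epochs (k :: t) | n + 1 ∈ epochs (k :: t) ∧ 0 < n} =
      {m ∈ epochs t | m + 1 ∈ epochs t}.image (· + k) := by
  ext n
  simp only [mem_filter, mem_image, mem_epochs_cons]
  constructor
  · rintro ⟨(rfl | ⟨hkn, hm⟩), (h | ⟨-, h⟩), hn⟩
    all_goals first
      | omega
      | exact ⟨n - k, ⟨hm, by rwa [show n - k + 1 = n + 1 - k by omega]⟩, by omega⟩
  · rintro ⟨m, ⟨hm, hm1⟩, rfl⟩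
    refine ⟨Or.inr ⟨by omega, by simpa using hm⟩, Or.inr ⟨by omega, ?_⟩, by omega⟩
    rwa [show m + k + 1 - k = m + 1 by omega]

lemma card_adjacent_epochs (ht : ∀ k ∈ t, 0 < k) :
    #{n ∈ epochs t | n + 1 ∈ epochs t} = t.count 1 := by
  induction t with
  | nil => simp [epochs]
  | cons k t ih =>
    have hk : 0 < k := ht k (by simp)
    rw [← card_filter_add_card_filter_not (p := (0 < ·)), filter_filter, filter_filter,
      filter_adjacent_epochs_cons hk, card_image_of_injective _ (add_left_injective k),
      ih fun j hj => ht j (by simp [hj]), List.count_cons]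
    congr 1
    have hzero : {n ∈ epochs (k :: t) | n + 1 ∈ epochs (k :: t) ∧ ¬0 < n} =
        if k = 1 then {0} else ∅ := by
      ext n
      rw [mem_filter, not_lt, Nat.le_zero]
      constructor
      · rintro ⟨-, h1, rfl⟩
        rw [zero_add, one_mem_epochs_cons_iff hk] at h1
        simp [h1]
      · intro hn
        split_ifs at hn with hk1
        · rw [mem_singleton.mp hn, zero_add, one_mem_epochs_cons_iff hk]
          exact ⟨zero_mem_epochs _, hk1, rfl⟩
        · simp at hn
    rw [hzero]
    split_ifs <;> simp_all

lemma card_adjacent_pos_epochs (ht : ∀ k ∈ t, 0 < k) :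
    #{n ∈ epochs t | n + 1 ∈ epochs t ∧ 0 < n} = t.tail.count 1 := by
  cases t with
  | nil => simp [epochs]
  | cons k t =>
    rw [filter_adjacent_epochs_cons (ht k (by simp)),
      card_image_of_injective _ (add_left_injective k),
      card_adjacent_epochs fun j hj => ht j (by simp [hj]), List.tail_cons]

end PositiveJumps

lemma prod_range_length_getD {M : Type*} [CommMonoid M] (f : ℕ → M) (t : List ℕ) :
    ∏ j ∈ range t.length, f (t.getD j 0) = (t.map f).prod := by
  induction t with
  | nil => simp
  | cons k t ih =>
    rw [List.length_cons, prod_range_succ', List.map_cons, List.prod_cons, ← ih, mul_comm]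
    simp

section Renewal

variable {Ω : Type*}

def jumpCylinder (T : ℕ → Ω → ℕ∞) (t : List ℕ) : Set Ω :=
  ⋂ j ∈ range t.length, T j ⁻¹' {((t.getD j 0 : ℕ) : ℕ∞)}

lemma mem_jumpCylinder_cons {T : ℕ → Ω → ℕ∞} {k : ℕ} {t : List ℕ} {x : Ω} :
    x ∈ jumpCylinder T (k :: t) ↔ T 0 x = k ∧ x ∈ jumpCylinder (fun j => T (j + 1)) t := by
  simp only [jumpCylinder, List.length_cons, Set.mem_iInter, mem_range, Set.mem_preimage,
    Set.mem_singleton_iff, Nat.forall_lt_succ_left, List.getD_cons_zero, List.getD_cons_succ]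

lemma exists_sum_range_eq_iff {M : Type*} [AddCommMonoid M] (f : ℕ → M) (a : M) :
    (∃ m, ∑ j ∈ range m, f j = a) ↔ a = 0 ∨ ∃ m, f 0 + ∑ j ∈ range m, f (j + 1) = a := by
  constructor
  · rintro ⟨_ | m, h⟩
    · exact Or.inl (by simpa using h.symm)
    · exact Or.inr ⟨m, by rwa [sum_range_succ', add_comm] at h⟩
  · rintro (rfl | ⟨m, h⟩)
    · exact ⟨0, sum_range_zero f⟩
    · exact ⟨m + 1, by rwa [sum_range_succ', add_comm]⟩

lemma natCast_add_eq_natCast_iff {k n : ℕ} {s : ℕ∞} :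
    (k : ℕ∞) + s = n ↔ k ≤ n ∧ s = ((n - k : ℕ) : ℕ∞) := by
  induction s using ENat.recTopCoe with
  | top => simp only [add_top, ENat.top_ne_natCast, and_false]
  | coe s => norm_cast; omega

lemma renews_iff_mem_epochs {T : ℕ → Ω → ℕ∞} {t : List ℕ} {x : Ω}
    (hx : x ∈ jumpCylinder T t) {n : ℕ} (hn : n ≤ t.sum) :
    (∃ m, ∑ j ∈ range m, T j x = n) ↔ n ∈ epochs t := by
  induction t generalizing T n with
  | nil =>
    obtain rfl : n = 0 := by simpa using hn
    exact iff_of_true ⟨0, by simp⟩ (by simp [epochs])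
  | cons k t ih =>
    obtain ⟨hk, hx⟩ := mem_jumpCylinder_cons.mp hx
    rw [exists_sum_range_eq_iff, hk, mem_epochs_cons, Nat.cast_eq_zero]
    refine or_congr Iff.rfl ?_
    rw [← ih hx (by simp only [List.sum_cons] at hn; omega)]
    simp only [natCast_add_eq_natCast_iff]
    constructor
    · rintro ⟨m, hkn, hm⟩
      exact ⟨hkn, m, hm⟩
    · rintro ⟨hkn, m, hm⟩
      exact ⟨m, hkn, hm⟩

lemma exists_mem_jumpCylinder {T : ℕ → Ω → ℕ∞} {x : Ω} (hpos : ∀ j, T j x ≠ 0) {m N : ℕ}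
    (hm : ∑ j ∈ range m, T j x = N) : ∃ t ∈ compositions N, x ∈ jumpCylinder T t := by
  induction m generalizing T N with
  | zero =>
    refine ⟨[], nil_mem_compositions.mpr ?_, by simp [jumpCylinder]⟩
    exact_mod_cast (by simpa using hm.symm : (N : ℕ∞) = 0)
  | succ m ih =>
    rw [sum_range_succ', add_comm] at hm
    obtain ⟨k, hk⟩ := ENat.ne_top_iff_exists.mp fun h : T 0 x = ⊤ => by simp [h] at hm
    rw [← hk, natCast_add_eq_natCast_iff] at hm
    obtain ⟨t, ht, hxt⟩ := ih (fun j => hpos (j + 1)) hm.2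
    have hk1 : 1 ≤ k := Nat.one_le_iff_ne_zero.mpr fun h => hpos 0 (by simp [← hk, h])
    exact ⟨k :: t, cons_mem_compositions.mpr ⟨hk1, hm.1, ht⟩,
      mem_jumpCylinder_cons.mpr ⟨hk.symm, hxt⟩⟩

lemma eq_of_mem_jumpCylinder {T : ℕ → Ω → ℕ∞} {x : Ω} {N : ℕ} {t s : List ℕ}
    (ht : t ∈ compositions N) (hs : s ∈ compositions N) (hxt : x ∈ jumpCylinder T t)
    (hxs : x ∈ jumpCylinder T s) : t = s := by
  induction t generalizing T N s with
  | nil =>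
    cases s with
    | nil => rfl
    | cons l s =>
      rw [nil_mem_compositions.mp ht, cons_mem_compositions] at hs
      omega
  | cons k t ih =>
    cases s with
    | nil =>
      rw [nil_mem_compositions.mp hs, cons_mem_compositions] at ht
      omega
    | cons l s =>
      obtain ⟨hk, hxt'⟩ := mem_jumpCylinder_cons.mp hxt
      obtain ⟨hl, hxs'⟩ := mem_jumpCylinder_cons.mp hxs
      obtain rfl : k = l := by exact_mod_cast hk.symm.trans hl
      rw [cons_mem_compositions] at ht hs
      rw [ih ht.2.2 hs.2.2 hxt' hxs']

end Renewal

lemma sum_Icc_ite_mem {N : ℕ} {S : Finset ℕ} (hS : ∀ n ∈ S, n ≤ N) :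
    ∑ n ∈ Icc 1 N, (if n ∈ S then 1 else 0 : ℝ) = #(S.erase 0) := by
  rw [sum_boole]
  congr 2
  ext n
  simp only [mem_filter, mem_Icc, mem_erase]
  constructor
  · rintro ⟨⟨h1, -⟩, hn⟩
    exact ⟨by omega, hn⟩
  · rintro ⟨h0, hn⟩
    exact ⟨⟨by omega, hS n hn⟩, hn⟩

lemma sum_pair_ite_mem {ρ : ℕ → ℝ} (hρ : ∀ k, 1 < k → ρ k = 0) {N : ℕ} {S : Finset ℕ}
    (hS : ∀ n ∈ S, n ≤ N) :
    ∑ i ∈ Icc 1 N, ∑ j ∈ Icc (i + 1) N,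
        ρ (j - i) * (if i ∈ S then 1 else 0) * (if j ∈ S then 1 else 0)
      = ρ 1 * #{n ∈ S | n + 1 ∈ S ∧ 0 < n} := by
  have hinner : ∀ i ∈ Icc 1 N, ∑ j ∈ Icc (i + 1) N,
      ρ (j - i) * (if i ∈ S then 1 else 0) * (if j ∈ S then 1 else 0)
        = ρ 1 * if i ∈ S ∧ i + 1 ∈ S then 1 else 0 := by
    intro i hi
    by_cases hiN : i + 1 ≤ N
    · rw [sum_eq_single_of_mem (i + 1) (mem_Icc.mpr ⟨le_rfl, hiN⟩) fun j hj hji => by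
        rw [hρ _ (by have := (mem_Icc.mp hj).1; omega), zero_mul, zero_mul]]
      rw [add_tsub_cancel_left]
      split_ifs <;> simp_all
    · have hS1 : i + 1 ∉ S := fun h => hiN (hS _ h)
      simp [Icc_eq_empty_of_lt (not_le.mp hiN), hS1]
  rw [sum_congr rfl hinner, ← mul_sum, sum_boole]
  congr 3
  ext n
  simp only [mem_filter, mem_Icc]
  constructor
  · rintro ⟨⟨h1, -⟩, hn, hn1⟩
    exact ⟨hn, hn1, h1⟩
  · rintro ⟨hn, hn1, h0⟩
    exact ⟨⟨h0, hS n hn⟩, hn, hn1⟩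

/-- The modified inter-arrival law `K_{(q=1)}`, with `b = ρ₁β²`. -/
noncomputable def Kq1 (K : ℕ → ℝ) (b : ℝ) (k : ℕ) : ℝ := if k = 1 then Real.exp b * K 1 else K k

lemma Kq1_nonneg {K : ℕ → ℝ} (hK : ∀ n, 0 ≤ K n) (b : ℝ) (k : ℕ) : 0 ≤ Kq1 K b k := by
  unfold Kq1
  split_ifs
  exacts [mul_nonneg (Real.exp_pos b).le (hK 1), hK k]

lemma Kq1_one_pos {K : ℕ → ℝ} (hK1 : 0 < K 1) (b : ℝ) : 0 < Kq1 K b 1 :=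
  mul_pos (Real.exp_pos b) hK1

lemma prod_map_exp_mul_Kq1 (K : ℕ → ℝ) (a b : ℝ) (t : List ℕ) :
    (t.map fun k => Real.exp a * Kq1 K b k).prod =
      Real.exp (a * t.length + b * t.count 1) * (t.map K).prod := by
  induction t with
  | nil => simp
  | cons k t ih =>
    rw [List.map_cons, List.prod_cons, ih, List.map_cons, List.prod_cons, List.length_cons,
      List.count_cons, Kq1]
    by_cases hk : k = 1
    · subst hk
      simp only [if_true, beq_self_eq_true]
      push_cast
      simp only [mul_add, Real.exp_add, mul_one]
      ring
    · simp only [hk, if_false, beq_iff_eq, add_zero]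
      push_cast
      simp only [mul_add, Real.exp_add, mul_one]
      ring

lemma abs_mul_count_sub_tail_count_le (b : ℝ) (t : List ℕ) :
    |b * t.count 1 - b * t.tail.count 1| ≤ |b| := by
  rw [← mul_sub, abs_mul]
  refine mul_le_of_le_one_right (abs_nonneg b) ?_
  cases t with
  | nil => simp
  | cons k t =>
    rw [List.tail_cons, List.count_cons]
    split_ifs <;> norm_num

section Model

variable {Ω : Type*}

noncomputable def zIntegrand (T : ℕ → Ω → ℕ∞) (ρ : ℕ → ℝ) (β h : ℝ) (N : ℕ) (x : Ω) : ℝ :=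
  Real.exp ((h + β ^ 2 / 2) * ∑ n ∈ Finset.Icc 1 N, renewalδ T n x
      + β ^ 2 * ∑ i ∈ Finset.Icc 1 N, ∑ j ∈ Finset.Icc (i + 1) N,
          ρ (j - i) * renewalδ T i x * renewalδ T j x) * renewalδ T N x

lemma zIntegrand_eq_of_mem_jumpCylinder {T : ℕ → Ω → ℕ∞} {ρ : ℕ → ℝ}
    (hρ : ∀ k, 1 < k → ρ k = 0) (β h : ℝ) {N : ℕ} {t : List ℕ} {x : Ω}
    (ht : t ∈ compositions N) (hx : x ∈ jumpCylinder T t) :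
    zIntegrand T ρ β h N x =
      Real.exp ((h + β ^ 2 / 2) * t.length + ρ 1 * β ^ 2 * t.tail.count 1) := by
  obtain ⟨hsum, hpos⟩ := mem_compositions.mp ht
  have hS : ∀ n ∈ epochs t, n ≤ N := fun n hn => hsum ▸ le_sum_of_mem_epochs hn
  have hδ : ∀ n ≤ N, renewalδ T n x = if n ∈ epochs t then 1 else 0 := fun n hn => by
    simp only [renewalδ, renews_iff_mem_epochs hx (hsum ▸ hn)]
  have hpair : ∀ i ∈ Icc 1 N, ∑ j ∈ Icc (i + 1) N, ρ (j - i) * renewalδ T i x * renewalδ T j x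
      = ∑ j ∈ Icc (i + 1) N,
          ρ (j - i) * (if i ∈ epochs t then 1 else 0) * (if j ∈ epochs t then 1 else 0) :=
    fun i hi => sum_congr rfl fun j hj => by
      rw [hδ i (mem_Icc.mp hi).2, hδ j (mem_Icc.mp hj).2]
  rw [zIntegrand, hδ N le_rfl, if_pos (hsum ▸ sum_mem_epochs t), mul_one,
    sum_congr rfl fun n hn => hδ n (mem_Icc.mp hn).2, sum_Icc_ite_mem hS, sum_congr rfl hpair,
    sum_pair_ite_mem hρ hS, card_erase_of_mem (zero_mem_epochs t), card_epochs hpos,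
    card_adjacent_pos_epochs hpos]
  push_cast
  ring_nf

variable [MeasurableSpace Ω] {P : Measure Ω} {T : ℕ → Ω → ℕ∞} {K : ℕ → ℝ}

lemma measure_jump_eq (hmeas : ∀ i, Measurable (T i))
    (hident : ∀ i, Measure.map (T i) P = Measure.map (T 0) P)
    (hlaw : ∀ n : ℕ, (P (T 0 ⁻¹' {(n : ℕ∞)})).toReal = K n) (j v : ℕ) :
    (P (T j ⁻¹' {(v : ℕ∞)})).toReal = K v := by
  rw [← Measure.map_apply (hmeas j) (measurableSet_singleton _), hident j,
    Measure.map_apply (hmeas 0) (measurableSet_singleton _), hlaw v]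

lemma measurableSet_jumpCylinder (hmeas : ∀ i, Measurable (T i)) (t : List ℕ) :
    MeasurableSet (jumpCylinder T t) :=
  Finset.measurableSet_biInter _ fun j _ => hmeas j (measurableSet_singleton _)

lemma measure_jumpCylinder (hmeas : ∀ i, Measurable (T i)) (hindep : iIndepFun T P)
    (hident : ∀ i, Measure.map (T i) P = Measure.map (T 0) P)
    (hlaw : ∀ n : ℕ, (P (T 0 ⁻¹' {(n : ℕ∞)})).toReal = K n) (t : List ℕ) :
    (P (jumpCylinder T t)).toReal = (t.map K).prod := by
  rw [jumpCylinder, hindep.measure_inter_preimage_eq_mul _ fun j _ => measurableSet_singleton _,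
    ENNReal.toReal_prod, ← prod_range_length_getD]
  exact prod_congr rfl fun j _ => measure_jump_eq hmeas hident hlaw j _

lemma ae_jump_ne_zero [IsFiniteMeasure P] (hmeas : ∀ i, Measurable (T i))
    (hident : ∀ i, Measure.map (T i) P = Measure.map (T 0) P) (hK0 : K 0 = 0)
    (hlaw : ∀ n : ℕ, (P (T 0 ⁻¹' {(n : ℕ∞)})).toReal = K n) : ∀ᵐ x ∂P, ∀ j, T j x ≠ 0 := by
  refine ae_all_iff.mpr fun j => ?_
  have hnull := measure_jump_eq hmeas hident hlaw j 0
  rw [hK0, ENNReal.toReal_eq_zero_iff] at hnull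
  exact (measure_eq_zero_iff_ae_notMem.mp (hnull.resolve_right (measure_ne_top P _))).mono
    fun x hx => by simpa using hx

lemma Zfun_eq_sum_compositions [IsFiniteMeasure P] (hmeas : ∀ i, Measurable (T i))
    (hindep : iIndepFun T P) (hident : ∀ i, Measure.map (T i) P = Measure.map (T 0) P)
    (hK0 : K 0 = 0) (hlaw : ∀ n : ℕ, (P (T 0 ⁻¹' {(n : ℕ∞)})).toReal = K n)
    {ρ : ℕ → ℝ} (hρ : ∀ k, 1 < k → ρ k = 0) (β h : ℝ) (N : ℕ) :
    Zfun P T ρ β h N = ∑ t ∈ compositions N,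
      Real.exp ((h + β ^ 2 / 2) * t.length + ρ 1 * β ^ 2 * t.tail.count 1) * (t.map K).prod := by
  set c := fun t : List ℕ => Real.exp ((h + β ^ 2 / 2) * t.length + ρ 1 * β ^ 2 * t.tail.count 1)
  have hae : zIntegrand T ρ β h N =ᵐ[P]
      fun x => ∑ t ∈ compositions N, (jumpCylinder T t).indicator (fun _ => c t) x := by
    filter_upwards [ae_jump_ne_zero hmeas hident hK0 hlaw] with x hx
    by_cases hcov : ∃ t ∈ compositions N, x ∈ jumpCylinder T t
    · obtain ⟨t, ht, hxt⟩ := hcov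
      rw [sum_eq_single_of_mem t ht fun s hs hst => Set.indicator_of_notMem
        (fun hxs => hst (eq_of_mem_jumpCylinder hs ht hxs hxt)) _, Set.indicator_of_mem hxt]
      exact zIntegrand_eq_of_mem_jumpCylinder hρ β h ht hxt
    · have hN : renewalδ T N x = 0 := if_neg fun ⟨m, hm⟩ => hcov (exists_mem_jumpCylinder hx hm)
      rw [zIntegrand, hN, mul_zero]
      exact (sum_eq_zero fun t ht => Set.indicator_of_notMem (fun hxt => hcov ⟨t, ht, hxt⟩) _).symm
  change ∫ x, zIntegrand T ρ β h N x ∂P = _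
  rw [integral_congr_ae hae, integral_finsetSum _ fun t _ =>
    (integrable_const (c t)).indicator (measurableSet_jumpCylinder hmeas t)]
  refine sum_congr rfl fun t _ => ?_
  rw [integral_indicator_const _ (measurableSet_jumpCylinder hmeas t), smul_eq_mul, measureReal_def,
    measure_jumpCylinder hmeas hindep hident hlaw, mul_comm]

lemma Zfun_bounds [IsFiniteMeasure P] (hmeas : ∀ i, Measurable (T i))
    (hindep : iIndepFun T P) (hident : ∀ i, Measure.map (T i) P = Measure.map (T 0) P)
    (hK0 : K 0 = 0) (hlaw : ∀ n : ℕ, (P (T 0 ⁻¹' {(n : ℕ∞)})).toReal = K n)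
    {ρ : ℕ → ℝ} (hρ : ∀ k, 1 < k → ρ k = 0) (β h : ℝ) (N : ℕ) :
    Real.exp (-|ρ 1 * β ^ 2|) *
          homogeneousZ (fun k => Real.exp (h + β ^ 2 / 2) * Kq1 K (ρ 1 * β ^ 2) k) N ≤
        Zfun P T ρ β h N ∧
      Zfun P T ρ β h N ≤ Real.exp |ρ 1 * β ^ 2| *
          homogeneousZ (fun k => Real.exp (h + β ^ 2 / 2) * Kq1 K (ρ 1 * β ^ 2) k) N := by
  have hK : ∀ n, 0 ≤ K n := fun n => hlaw n ▸ ENNReal.toReal_nonneg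
  have hprod : ∀ t : List ℕ, 0 ≤ (t.map K).prod := fun t => List.prod_nonneg fun a ha => by
    obtain ⟨k, -, rfl⟩ := List.mem_map.mp ha
    exact hK k
  have hcount := fun t => abs_le.mp (abs_mul_count_sub_tail_count_le (ρ 1 * β ^ 2) t)
  simp only [Zfun_eq_sum_compositions hmeas hindep hident hK0 hlaw hρ, homogeneousZ, mul_sum,
    prod_map_exp_mul_Kq1, ← mul_assoc, ← Real.exp_add]
  constructor <;> refine sum_le_sum fun t _ => mul_le_mul_of_nonneg_right
    (Real.exp_le_exp.mpr ?_) (hprod t)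
  · linarith [(hcount t).2]
  · linarith [(hcount t).1]

lemma summable_jump_law [IsFiniteMeasure P] (hmeas : ∀ i, Measurable (T i))
    (hlaw : ∀ n : ℕ, (P (T 0 ⁻¹' {(n : ℕ∞)})).toReal = K n) : Summable K := by
  have hdisj : Pairwise (Function.onFun Disjoint fun n : ℕ => T 0 ⁻¹' {(n : ℕ∞)}) :=
    fun i j hij => Set.disjoint_left.mpr fun x hi hj => hij (by
      simp only [Set.mem_preimage, Set.mem_singleton_iff] at hi hj
      exact_mod_cast hi.symm.trans hj)
  have hfin := (tsum_meas_le_meas_iUnion_of_disjoint P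
    (fun n => hmeas 0 (measurableSet_singleton _)) hdisj).trans_lt (measure_lt_top P _)
  simpa only [hlaw] using ENNReal.summable_toReal hfin.ne

end Model

lemma sum_Icc_one_eq_sum_range {M : Type*} [AddCommMonoid M] (f : ℕ → M) (L : ℕ) :
    ∑ k ∈ Icc 1 L, f k = ∑ n ∈ range L, f (n + 1) := by
  rw [← Finset.Ico_add_one_right_eq_Icc, Finset.sum_Ico_eq_sum_range]
  simp [add_comm]

lemma tendsto_sum_Icc_Kq1 {K : ℕ → ℝ} {s : ℝ} (hK : HasSum (fun n => K (n + 1)) s) (b : ℝ) :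
    Tendsto (fun L => ∑ k ∈ Icc 1 L, Kq1 K b k) atTop (𝓝 (s + K 1 * (Real.exp b - 1))) := by
  have hsum : HasSum (fun n => Kq1 K b (n + 1)) (s + K 1 * (Real.exp b - 1)) := by
    refine (hK.add (hasSum_ite_eq 0 (K 1 * (Real.exp b - 1)))).congr_fun fun n => ?_
    rcases n with _ | n
    · simp only [Kq1, if_true]
      ring
    · simp [Kq1]
  simpa only [sum_Icc_one_eq_sum_range] using hsum.tendsto_sum_nat

lemma exp_neg_log_sub_log_mul {u v E : ℝ} (hu : 0 < u) (hS : 0 < u + v * (E - 1)) :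
    Real.exp (-Real.log u - Real.log (1 + v / u * (E - 1))) * (u + v * (E - 1)) = 1 := by
  rw [show 1 + v / u * (E - 1) = (u + v * (E - 1)) / u by field_simp,
    Real.log_div hS.ne' hu.ne', show ∀ x y : ℝ, -x - (y - x) = -y by intros; ring,
    Real.exp_neg, Real.exp_log hS, inv_mul_cancel₀ hS.ne']

theorem annealed_critical_curve_q_one_general
    {Ω : Type*} [MeasurableSpace Ω] (P : Measure Ω) [IsProbabilityMeasure P]
    (T : ℕ → Ω → ℕ∞) (hmeas : ∀ i, Measurable (T i))
    (hindep : iIndepFun T P)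
    (hident : ∀ i, Measure.map (T i) P = Measure.map (T 0) P)
    (K : ℕ → ℝ) (Kinf : ℝ) (hK0 : K 0 = 0) (hKpos : ∀ n, 1 ≤ n → 0 < K n)
    (hlaw : ∀ n : ℕ, (P (T 0 ⁻¹' {(n : ℕ∞)})).toReal = K n)
    (hKinf : Kinf = 1 - ∑' n : ℕ, K (n + 1))
    (ρ : ℕ → ℝ) (hρ : ∀ k, 1 < k → ρ k = 0)  -- range q = 1
    (Fann : ℝ → ℝ → ℝ)
    (hFann : ∀ β h : ℝ, 0 ≤ β →
      Tendsto (fun N : ℕ => Real.log (Zfun P T ρ β h N) / N) atTop (nhds (Fann β h)))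
    (β : ℝ) (hβ : 0 ≤ β) :
    sSup {h : ℝ | Fann β h = 0} =
      -Real.log (1 - Kinf) - β ^ 2 / 2 -
        Real.log (1 + K 1 / (1 - Kinf) * (Real.exp (ρ 1 * β ^ 2) - 1)) := by
  have hK : ∀ n, 0 ≤ K n := fun n => hlaw n ▸ ENNReal.toReal_nonneg
  have hK1 : 0 < K 1 := hKpos 1 le_rfl
  have hKsum : HasSum (fun n => K (n + 1)) (1 - Kinf) := by
    rw [hKinf, sub_sub_cancel]
    exact ((summable_nat_add_iff 1).mpr (summable_jump_law hmeas hlaw)).hasSum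
  have hK1le : K 1 ≤ 1 - Kinf := le_hasSum hKsum 0 fun n _ => hK (n + 1)
  set S := 1 - Kinf + K 1 * (Real.exp (ρ 1 * β ^ 2) - 1)
  have hS : 0 < S := by nlinarith [Real.exp_pos (ρ 1 * β ^ 2)]
  set hc := -Real.log (1 - Kinf) - β ^ 2 / 2 -
    Real.log (1 + K 1 / (1 - Kinf) * (Real.exp (ρ 1 * β ^ 2) - 1))
  have hcrit : Real.exp (hc + β ^ 2 / 2) * S = 1 := by
    rw [← exp_neg_log_sub_log_mul (hK1.trans_le hK1le) hS]
    congr 2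
    ring
  set w := fun h k => Real.exp (h + β ^ 2 / 2) * Kq1 K (ρ 1 * β ^ 2) k
  have hw h k : 0 ≤ w h k := mul_nonneg (Real.exp_pos _).le (Kq1_nonneg hK _ k)
  have hw1 h : 0 < w h 1 := mul_pos (Real.exp_pos _) (Kq1_one_pos hK1 _)
  have hmass h : Tendsto (fun L => ∑ k ∈ Icc 1 L, w h k) atTop
      (𝓝 (Real.exp (h + β ^ 2 / 2) * S)) := by
    simpa only [w, mul_sum] using (tendsto_sum_Icc_Kq1 hKsum _).const_mul _
  have hZ := Zfun_bounds hmeas hindep hident hK0 hlaw hρ β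
  refine IsGreatest.csSup_eq ⟨le_antisymm ?_ ?_, fun h hh => ?_⟩
  · exact freeEnergy_nonpos (hw hc) (hw1 hc) (hmass hc) hcrit.le (Real.exp_pos _)
      (Real.exp_pos _) (hZ hc) (hFann β hc hβ)
  · exact freeEnergy_nonneg (hw hc) (hw1 hc) (hmass hc) hcrit.ge (Real.exp_pos _)
      (fun N => (hZ hc N).1) (hFann β hc hβ)
  · by_contra! hlt
    have hsuper : 1 < Real.exp (h + β ^ 2 / 2) * S := hcrit ▸
      mul_lt_mul_of_pos_right (Real.exp_lt_exp.mpr (by linarith)) hS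
    exact (freeEnergy_pos (hw h) (hw1 h) (hmass h) hsuper (Real.exp_pos _)
      (fun N => (hZ h N).1) (hFann β h hβ)).ne' hh

/-- The annealed critical curve for `q = 1` correlations:
`h_c^ann(β) = −log(1−K(∞)) − β²/2 − log(1 + (K(1)/(1−K(∞)))(e^{ρ₁β²} − 1))`. -/
theorem annealed_critical_curve_q_one
    {Ω : Type*} [MeasurableSpace Ω] (P : Measure Ω) [IsProbabilityMeasure P]
    (T : ℕ → Ω → ℕ∞) (hmeas : ∀ i, Measurable (T i))
    (hindep : iIndepFun T P)
    (hident : ∀ i, Measure.map (T i) P = Measure.map (T 0) P)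
    (K : ℕ → ℝ) (Kinf : ℝ) (hK0 : K 0 = 0) (hKpos : ∀ n, 1 ≤ n → 0 < K n)
    (hlaw : ∀ n : ℕ, (P (T 0 ⁻¹' {(n : ℕ∞)})).toReal = K n)
    (hlawtop : (P (T 0 ⁻¹' {(⊤ : ℕ∞)})).toReal = Kinf)
    (hKinf : Kinf = 1 - ∑' n : ℕ, K (n + 1)) (hKinf1 : Kinf < 1)
    (ρ : ℕ → ℝ) (hρ : ∀ k, 1 < k → ρ k = 0)  -- range q = 1
    (Fann : ℝ → ℝ → ℝ)
    (hFann : ∀ β h : ℝ, 0 ≤ β →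
      Tendsto (fun N : ℕ => Real.log (Zfun P T ρ β h N) / N) atTop (nhds (Fann β h)))
    (β : ℝ) (hβ : 0 ≤ β) :
    sSup {h : ℝ | Fann β h = 0} =
      -Real.log (1 - Kinf) - β ^ 2 / 2 -
        Real.log (1 + K 1 / (1 - Kinf) * (Real.exp (ρ 1 * β ^ 2) - 1)) :=
  annealed_critical_curve_q_one_general P T hmeas hindep hident K Kinf hK0 hKpos hlaw hKinf ρ hρ
    Fann hFann β hβ
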